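/- Let G be a graph in which every vertex has connected neighborhood, V_X a set of vertices such that G − V_X is diamond-free and every induced diamond of G has an edge inside V_X. Let C be the vertex set of a maximal clique of G − V_X, and for v ∈ C let B_v be the set of vertices of V(G) \ (V_X ∪ C) adjacent to v (and to exactly one vertex of C), and D_v the set of vertices of V_X adjacent to exactly one vertex of C, that vertex being v. If B_v is non-empty, then D_v is non-empty. -/

import Mathlib

/-!
Suppose `D_v` is empty and take `u ∈ B_v`. By maximality of `C`, some `w ∈ C` is not adjacent
to `u`, so `w ≠ v`. Both `u` and `w` lie in `N(v)`; `u` is outside `C` with `v` as its only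
neighbour in `C`, while `w ∈ C \ {v}`. So along a path from `u` to `w` in `G[N(v)]` there is an
edge `yz` where `y` is still outside `C` and sees only `v` in `C`, but `z` sees some
`c ∈ C \ {v}`. Then `y, c` are the tips and `v, z` the spine of an induced diamond. As `D_v` is
empty, `y ∉ V_X`, and `c, v ∉ V_X`, so the diamond has at most one vertex in `V_X` and hence no
edge inside `V_X`.
-/

def diamondGraph : SimpleGraph (Fin 4) :=
  (SimpleGraph.completeGraph (Fin 4)).deleteEdges {s(0, 1)}

def DiamondFree {V : Type*} (G : SimpleGraph V) : Prop :=
  IsEmpty (diamondGraph ↪g G)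

namespace SimpleGraph

variable {V : Type*} {G : SimpleGraph V}

def diamondEmbedding {a b c d : V} (hab : a ≠ b) (hnab : ¬G.Adj a b) (hac : G.Adj a c)
    (had : G.Adj a d) (hbc : G.Adj b c) (hbd : G.Adj b d) (hcd : G.Adj c d) :
    diamondGraph ↪g G where
  toFun := ![a, b, c, d]
  inj' := by
    intro i j
    fin_cases i <;> fin_cases j <;>
      simp [hab, hab.symm, hac.ne, hac.ne.symm, had.ne, had.ne.symm, hbc.ne, hbc.ne.symm,
        hbd.ne, hbd.ne.symm, hcd.ne, hcd.ne.symm]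
  map_rel_iff' := by
    intro i j
    change G.Adj (![a, b, c, d] i) (![a, b, c, d] j) ↔ _
    fin_cases i <;> fin_cases j <;>
      simp [diamondGraph, hnab, mt G.adj_symm hnab, hac, hac.symm, had, had.symm, hbc, hbc.symm,
        hbd, hbd.symm, hcd, hcd.symm]

/-- Every edge of the diamond has an endpoint among `a`, `b`, `c`. -/
lemma mem_or_mem_or_mem_of_diamond {S : Set V}
    (hdia : ∀ f : diamondGraph ↪g G, ∃ x y : Fin 4, diamondGraph.Adj x y ∧ f x ∈ S ∧ f y ∈ S)
    {a b c d : V} (hab : a ≠ b) (hnab : ¬G.Adj a b) (hac : G.Adj a c) (had : G.Adj a d)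
    (hbc : G.Adj b c) (hbd : G.Adj b d) (hcd : G.Adj c d) :
    a ∈ S ∨ b ∈ S ∨ c ∈ S := by
  obtain ⟨x, y, hxy, hx, hy⟩ := hdia (diamondEmbedding hab hnab hac had hbc hbd hcd)
  change ![a, b, c, d] x ∈ S at hx
  change ![a, b, c, d] y ∈ S at hy
  fin_cases x <;> fin_cases y <;> simp_all [diamondGraph]

lemma exists_not_adj_of_maximal_clique {X C : Set V} (hCX : C ⊆ Xᶜ) (hC : G.IsClique C)
    (hmax : ∀ D : Set V, G.IsClique D → D ⊆ Xᶜ → C ⊆ D → D = C)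
    {u : V} (huX : u ∉ X) (huC : u ∉ C) : ∃ c ∈ C, ¬G.Adj u c := by
  by_contra! h
  have hins := hmax (insert u C) (hC.insert fun c hc _ => h c hc)
    (Set.insert_subset huX hCX) (Set.subset_insert u C)
  exact huC (hins ▸ Set.mem_insert u C)

lemma inter_neighborSet_eq_singleton_iff {C : Set V} {v y : V} (hvC : v ∈ C)
    (hyv : G.Adj y v) : C ∩ G.neighborSet y = {v} ↔ ∀ c ∈ C, G.Adj y c → c = v := by
  rw [Set.eq_singleton_iff_unique_mem]
  exact ⟨fun h c hc hyc => h.2 c ⟨hc, hyc⟩, fun h => ⟨⟨hvC, hyv⟩, fun c hc => h c hc.1 hc.2⟩⟩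

/-- `yz` is where a path from `u` to `w` in `G[N(v)]` leaves the set of vertices outside `C`
whose only neighbour in `C` is `v`. -/
lemma exists_adj_private_neighbor_of_connected {C : Set V} {v u w : V}
    (hconn : (G.induce (G.neighborSet v)).Connected) (hvC : v ∈ C)
    (hvu : G.Adj v u) (huC : u ∉ C) (hCu : C ∩ G.neighborSet u = {v})
    (hwC : w ∈ C) (hvw : G.Adj v w) :
    ∃ y z c, G.Adj v y ∧ G.Adj v z ∧ G.Adj y z ∧ y ∉ C ∧ C ∩ G.neighborSet y = {v} ∧
      c ∈ C ∧ c ≠ v ∧ G.Adj z c := by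
  let S : Set (G.neighborSet v) := {x | ↑x ∉ C ∧ C ∩ G.neighborSet x = {v}}
  obtain ⟨p⟩ := hconn.preconnected ⟨u, hvu⟩ ⟨w, hvw⟩
  obtain ⟨d, -, ⟨hyC, hCy⟩, hzS⟩ :=
    p.exists_boundary_dart S ⟨huC, hCu⟩ fun hw => hw.1 hwC
  obtain ⟨⟨⟨y, hvy : G.Adj v y⟩, ⟨z, hvz : G.Adj v z⟩⟩, hyz : G.Adj y z⟩ := d
  have hy_only := (inter_neighborSet_eq_singleton_iff hvC hvy.symm).1 hCy
  have hzC : z ∉ C := fun hzC => hvz.ne (hy_only z hzC hyz).symm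
  obtain ⟨c, hcC, hzc, hcv⟩ : ∃ c ∈ C, G.Adj z c ∧ c ≠ v := by
    by_contra! h
    exact hzS ⟨hzC, (inter_neighborSet_eq_singleton_iff hvC hvz.symm).2 h⟩
  exact ⟨y, z, c, hvy, hvz, hyz, hyC, hCy, hcC, hcv, hzc⟩

end SimpleGraph

open SimpleGraph

theorem stmt_13_general {V : Type*} (G : SimpleGraph V)
    (hnbr : ∀ w : V, (G.induce (G.neighborSet w)).Connected)
    (VX : Set V)
    (hdia : ∀ f : diamondGraph ↪g G, ∃ x y : Fin 4,
      diamondGraph.Adj x y ∧ f x ∈ VX ∧ f y ∈ VX)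
    (C : Set V) (hCdisj : C ⊆ VXᶜ) (hC : G.IsClique C)
    (hmax : ∀ D : Set V, G.IsClique D → D ⊆ VXᶜ → C ⊆ D → D = C)
    (v : V) (hvC : v ∈ C)
    (hB : {u : V | u ∉ VX ∧ u ∉ C ∧ C ∩ G.neighborSet u = {v}}.Nonempty) :
    {u : V | u ∈ VX ∧ C ∩ G.neighborSet u = {v}}.Nonempty := by
  obtain ⟨u, huX, huC, hCu⟩ := hB
  have hvu : G.Adj v u := (hCu.symm.subset rfl).2.symm
  obtain ⟨w, hwC, huw⟩ := exists_not_adj_of_maximal_clique hCdisj hC hmax huX huC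
  have hwv : w ≠ v := by rintro rfl; exact huw hvu.symm
  obtain ⟨y, z, c, hvy, hvz, hyz, hyC, hCy, hcC, hcv, hzc⟩ :=
    exists_adj_private_neighbor_of_connected (hnbr v) hvC hvu huC hCu hwC
      (hC hvC hwC hwv.symm)
  have hyc : ¬G.Adj y c := fun h => hcv (hCy.subset ⟨hcC, h⟩)
  by_contra hD
  rcases mem_or_mem_or_mem_of_diamond hdia (ne_of_mem_of_not_mem hcC hyC).symm hyc hvy.symm hyz
      (hC hcC hvC hcv) hzc.symm hvz with hyX | hcX | hvX
  · exact hD ⟨y, hyX, hCy⟩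
  · exact hCdisj hcC hcX
  · exact hCdisj hvC hvX

/-- Suppose every vertex of `G` has connected neighborhood, `G - VX` is diamond-free,
every induced diamond of `G` has an edge with both endpoints in `VX`, and `C` is the
vertex set of a maximal clique of `G - VX` with `v ∈ C`. If `B_v` (the vertices outside
`VX ∪ C` whose unique neighbor in `C` is `v`) is nonempty, then `D_v` (the vertices of
`VX` whose unique neighbor in `C` is `v`) is nonempty. -/
theorem stmt_13 {V : Type*} (G : SimpleGraph V)
    (hnbr : ∀ w : V, (G.induce (G.neighborSet w)).Connected)
    (VX : Set V)
    (hdf : DiamondFree (G.induce VXᶜ))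
    (hdia : ∀ f : diamondGraph ↪g G, ∃ x y : Fin 4,
      diamondGraph.Adj x y ∧ f x ∈ VX ∧ f y ∈ VX)
    (C : Set V) (hCdisj : C ⊆ VXᶜ) (hC : G.IsClique C)
    (hmax : ∀ D : Set V, G.IsClique D → D ⊆ VXᶜ → C ⊆ D → D = C)
    (v : V) (hvC : v ∈ C)
    (hB : {u : V | u ∉ VX ∧ u ∉ C ∧ C ∩ G.neighborSet u = {v}}.Nonempty) :
    {u : V | u ∈ VX ∧ C ∩ G.neighborSet u = {v}}.Nonempty :=
  stmt_13_general G hnbr VX hdia C hCdisj hC hmax v hvC hB
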